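/- For a prime p ≥ 5, the Farey graph M₃(p) has diameter 3. -/

import Mathlib

/-- Nonzero pairs over `ZMod p`. -/
def FPair (p : ℕ) : Type := {v : ZMod p × ZMod p // v ≠ 0}

/-- The equivalence identifying `v` with `-v`. -/
def fareySetoid (p : ℕ) : Setoid (FPair p) where
  r v w := w.1 = v.1 ∨ w.1 = -v.1
  iseqv := by
    refine ⟨fun v => Or.inl rfl, ?_, ?_⟩
    · rintro v w (h | h)
      · exact Or.inl h.symm
      · exact Or.inr (by rw [h, neg_neg])
    · rintro u v w (h1 | h1) (h2 | h2)
      · exact Or.inl (h2.trans h1)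
      · exact Or.inr (by rw [h2, h1])
      · exact Or.inr (h2.trans (by rw [h1]))
      · exact Or.inl (by rw [h2, h1, neg_neg])

/-- Vertices of the Farey map `M₃(p)`: nonzero pairs mod `±1`. -/
def FV (p : ℕ) : Type := Quotient (fareySetoid p)

def det₂ {p : ℕ} (v w : ZMod p × ZMod p) : ZMod p := v.1 * w.2 - w.1 * v.2

/-- The Farey graph `M₃(p)`: `[a:c] ~ [b:d]` iff `a*d - b*c = ±1`. -/
def FGraph (p : ℕ) : SimpleGraph (FV p) where
  Adj x y := x ≠ y ∧ ∃ v w : FPair p,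
      x = Quotient.mk (fareySetoid p) v ∧ y = Quotient.mk (fareySetoid p) w ∧
      (det₂ v.1 w.1 = 1 ∨ det₂ v.1 w.1 = -1)
  symm := ⟨by
    rintro x y ⟨hxy, v, w, hx, hy, h⟩
    refine ⟨hxy.symm, w, v, hy, hx, ?_⟩
    have : det₂ w.1 v.1 = -det₂ v.1 w.1 := by unfold det₂; ring
    rcases h with h | h
    · exact Or.inr (by rw [this, h])
    · exact Or.inl (by rw [this, h, neg_neg])⟩
  loopless := ⟨fun x h => h.1 rfl⟩

/-- `[a : c]` as a vertex of `M₃(p)` (with a junk default for the zero pair). -/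
noncomputable def fvq (p : ℕ) [Fact p.Prime] (a c : ZMod p) : FV p :=
  if h : ((a, c) : ZMod p × ZMod p) ≠ 0 then Quotient.mk (fareySetoid p) ⟨(a, c), h⟩
  else Quotient.mk (fareySetoid p) ⟨(1, 0), by simp [Prod.ext_iff]⟩

/-!
An edge of `M₃(p)` joins `[v]` and `[w]` exactly when `det(v, w) = ±1`. Every nonzero `v` has a
partner `u` with `det(v, u) = 1`, and replacing `u` by `u + v` if necessary makes `u`
independent of any given nonzero `w`; then `(u + w) / det(u, w)` is a common partner of `u` and
`w`, giving a path of length three between any two vertices. Conversely a common neighbour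
`[s : t]` of `[1 : 0]` and `[2 : 0]` would have `t = ±1` and `2t = ±1`, which forces `3 = 0`
in `ZMod p`, so these two vertices are at distance three once `p ≥ 5`.
-/

attribute [local instance] fareySetoid

open SimpleGraph

section det₂

variable {p : ℕ}

lemma det₂_swap (v w : ZMod p × ZMod p) : det₂ w v = -det₂ v w := by
  unfold det₂; ring

lemma det₂_self (v : ZMod p × ZMod p) : det₂ v v = 0 := by
  unfold det₂; ring

lemma det₂_neg_left (v w : ZMod p × ZMod p) : det₂ (-v) w = -det₂ v w := by
  simp only [det₂, Prod.fst_neg, Prod.snd_neg]; ring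

lemma det₂_neg_right (v w : ZMod p × ZMod p) : det₂ v (-w) = -det₂ v w := by
  simp only [det₂, Prod.fst_neg, Prod.snd_neg]; ring

lemma det₂_add_left (u v w : ZMod p × ZMod p) : det₂ (u + v) w = det₂ u w + det₂ v w := by
  simp only [det₂, Prod.fst_add, Prod.snd_add]; ring

lemma eq_zero_of_det₂_eq_zero {u v w : ZMod p × ZMod p} (huv : det₂ v u = 1)
    (hv : det₂ v w = 0) (hu : det₂ u w = 0) : w = 0 := by
  unfold det₂ at huv hv hu
  ext <;> simp only [Prod.fst_zero, Prod.snd_zero]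
  · linear_combination (-w.1) * huv + u.1 * hv - v.1 * hu
  · linear_combination (-w.2) * huv + u.2 * hv - v.2 * hu

lemma ne_zero_of_det₂_eq_one [Nontrivial (ZMod p)] {v w : ZMod p × ZMod p} (h : det₂ v w = 1) :
    v ≠ 0 ∧ w ≠ 0 := by
  constructor <;> rintro rfl <;> simp [det₂] at h

end det₂

section Unimodular

variable {p : ℕ} [Fact p.Prime]

lemma exists_det₂_eq_one {v : ZMod p × ZMod p} (hv : v ≠ 0) : ∃ u, det₂ v u = 1 := by
  by_cases h₁ : v.1 = 0
  · have h₂ : v.2 ≠ 0 := fun h₂ => hv (Prod.ext h₁ h₂)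
    exact ⟨(-v.2⁻¹, 0), by simp [det₂, h₂]⟩
  · exact ⟨(0, v.1⁻¹), by simp [det₂, h₁]⟩

lemma exists_det₂_eq_one_and_det₂_ne_zero {v w : ZMod p × ZMod p} (hv : v ≠ 0) (hw : w ≠ 0) :
    ∃ u, det₂ v u = 1 ∧ det₂ u w ≠ 0 := by
  obtain ⟨u, hu⟩ := exists_det₂_eq_one hv
  by_cases huw : det₂ u w = 0
  · refine ⟨u + v, ?_, fun h => hw (eq_zero_of_det₂_eq_zero hu ?_ huw)⟩
    · rw [det₂_swap, det₂_add_left, det₂_self, det₂_swap, hu]; ring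
    · rwa [det₂_add_left, huw, zero_add] at h
  · exact ⟨u, hu, huw⟩

lemma exists_det₂_chain {v w : ZMod p × ZMod p} (hv : v ≠ 0) (hw : w ≠ 0) :
    ∃ u₁ u₂, det₂ v u₁ = 1 ∧ det₂ u₁ u₂ = 1 ∧ det₂ u₂ w = 1 := by
  obtain ⟨u, hu, huw⟩ := exists_det₂_eq_one_and_det₂_ne_zero hv hw
  refine ⟨u, (det₂ u w)⁻¹ • (u + w), hu, ?_, ?_⟩
  all_goals
    unfold det₂ at huw ⊢
    simp only [Prod.smul_fst, Prod.smul_snd, Prod.fst_add, Prod.snd_add, smul_eq_mul]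
    field_simp
    ring

end Unimodular

namespace FGraph

variable {p : ℕ}

lemma mk_eq_mk_iff {v w : FPair p} : (⟦v⟧ : FV p) = ⟦w⟧ ↔ w.1 = v.1 ∨ w.1 = -v.1 :=
  Quotient.eq

lemma det₂_eq_or_eq_neg_of_mk_eq {v v' w w' : FPair p} (hv : (⟦v⟧ : FV p) = ⟦v'⟧)
    (hw : (⟦w⟧ : FV p) = ⟦w'⟧) :
    det₂ v'.1 w'.1 = det₂ v.1 w.1 ∨ det₂ v'.1 w'.1 = -det₂ v.1 w.1 := by
  rcases mk_eq_mk_iff.1 hv with h | h <;> rcases mk_eq_mk_iff.1 hw with h' | h' <;>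
    simp [h, h', det₂_neg_left, det₂_neg_right]

lemma adj_mk_iff [Nontrivial (ZMod p)] {v w : FPair p} :
    (FGraph p).Adj ⟦v⟧ ⟦w⟧ ↔ det₂ v.1 w.1 = 1 ∨ det₂ v.1 w.1 = -1 := by
  constructor
  · rintro ⟨-, v', w', hv, hw, h⟩
    rcases det₂_eq_or_eq_neg_of_mk_eq hv hw with e | e <;> rw [e] at h
    · exact h
    · rwa [neg_eq_iff_eq_neg, neg_inj, or_comm] at h
  · refine fun h => ⟨fun he => ?_, v, w, rfl, rfl, h⟩
    rcases mk_eq_mk_iff.1 he with e | e <;> rcases h with h | h <;>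
      simp [e, det₂_neg_right, det₂_self] at h

lemma two_lt_edist_of_snd_eq_zero [Nontrivial (ZMod p)] {v w : FPair p} (hv : v.1.2 = 0)
    (hw : w.1.2 = 0) (hvw : w.1.1 ≠ v.1.1) (hvw' : w.1.1 ≠ -v.1.1) :
    2 < (FGraph p).edist ⟦v⟧ ⟦w⟧ := by
  refine two_lt_edist_iff.2 ⟨?_, ?_, Set.eq_empty_iff_forall_notMem.2 fun x hx => ?_⟩
  · intro h
    rcases mk_eq_mk_iff.1 h with h | h
    · exact hvw (congrArg Prod.fst h)
    · exact hvw' (by simpa using congrArg Prod.fst h)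
  · simp [adj_mk_iff, det₂, hv, hw]
  · induction x using Quotient.inductionOn with
    | h u =>
      have h₁ := adj_mk_iff.1 hx.1
      have h₂ := adj_mk_iff.1 hx.2
      simp only [det₂, hv, hw, mul_zero, sub_zero] at h₁ h₂
      -- `v₁ t = ±1` makes `t` a unit, so `w₁ t = ±1` forces `w₁ = ±v₁`
      rcases h₁ with h₁ | h₁ <;> rcases h₂ with h₂ | h₂
      · exact hvw (by linear_combination (-w.1.1) * h₁ + v.1.1 * h₂)
      · exact hvw' (by linear_combination (-w.1.1) * h₁ + v.1.1 * h₂)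
      · exact hvw' (by linear_combination w.1.1 * h₁ - v.1.1 * h₂)
      · exact hvw (by linear_combination w.1.1 * h₁ - v.1.1 * h₂)

lemma edist_le_three [Fact p.Prime] (x y : FV p) : (FGraph p).edist x y ≤ 3 := by
  induction x, y using Quotient.inductionOn₂ with
  | h v w =>
    obtain ⟨u₁, u₂, h₁, h₂, h₃⟩ := exists_det₂_chain v.2 w.2
    let U₁ : FPair p := ⟨u₁, (ne_zero_of_det₂_eq_one h₁).2⟩
    let U₂ : FPair p := ⟨u₂, (ne_zero_of_det₂_eq_one h₂).2⟩
    have adj {a b : FPair p} (h : det₂ a.1 b.1 = 1) : (FGraph p).Adj ⟦a⟧ ⟦b⟧ :=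
      adj_mk_iff.2 (Or.inl h)
    exact (Walk.cons (adj (b := U₁) h₁) (.cons (adj (b := U₂) h₂) (.cons (adj h₃) .nil))).edist_le

end FGraph

/-- For a prime `p ≥ 5`, the Farey graph `M₃(p)` has diameter `3`. -/
theorem farey_diam (p : ℕ) [Fact p.Prime] (hp : 5 ≤ p) :
    (FGraph p).diam = 3 := by
  have natCast_ne_zero {n : ℕ} (hn : 0 < n) (hnp : n < p) : (n : ZMod p) ≠ 0 := by
    rw [Ne, ZMod.natCast_eq_zero_iff]
    exact fun h => absurd (Nat.le_of_dvd hn h) (by omega)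
  have h₂ : (2 : ZMod p) ≠ 0 := by exact_mod_cast natCast_ne_zero (n := 2) (by norm_num) (by omega)
  have h₃ : (3 : ZMod p) ≠ 0 := by exact_mod_cast natCast_ne_zero (n := 3) (by norm_num) (by omega)
  let v : FPair p := ⟨(1, 0), by simp⟩
  let w : FPair p := ⟨(2, 0), by simp [h₂]⟩
  have hfar : 2 < (FGraph p).edist ⟦v⟧ ⟦w⟧ :=
    FGraph.two_lt_edist_of_snd_eq_zero rfl rfl
      (fun h => one_ne_zero (by linear_combination (h : (2 : ZMod p) = 1)))
      (fun h => h₃ (by linear_combination (h : (2 : ZMod p) = -1)))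
  have hediam : (FGraph p).ediam = 3 :=
    le_antisymm (ediam_le_of_edist_le FGraph.edist_le_three)
      ((Order.add_one_le_of_lt hfar).trans edist_le_ediam)
  rw [SimpleGraph.diam, hediam]
  rfl
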